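/- Suppose S' is uniform on 𝒮, independent of the pair (W, S) where S also takes values in 𝒮, and (W, S) determines X. Then I(S'; (W, S ⊕ S')) ≤ log|𝒲| + log|𝒮| − H(X), where ⊕ is XOR on 𝒮 viewed as a group. -/
import Mathlib


open MeasureTheory ProbabilityTheory

/-- Shannon entropy (in bits) of a random variable with values in a finite alphabet,
with the convention `0 · log₂ 0 = 0` (which holds since `Real.logb 2 0 = 0`). -/
noncomputable def ent {Ω α : Type*} [MeasurableSpace Ω] [Fintype α]
    (μ : Measure Ω) (X : Ω → α) : ℝ :=
  -∑ a : α, (μ (X ⁻¹' {a})).toReal * Real.logb 2 (μ (X ⁻¹' {a})).toReal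

/-- Mutual information (in bits): `I(X;Y) = H(X) + H(Y) − H(X,Y)`. -/
noncomputable def mi {Ω α β : Type*} [MeasurableSpace Ω] [Fintype α] [Fintype β]
    (μ : Measure Ω) (X : Ω → α) (Y : Ω → β) : ℝ :=
  ent μ X + ent μ Y - ent μ (fun ω => (X ω, Y ω))

/-- Sum of fiber probabilities is 1. -/
lemma sum_toReal_preimage {Ω α : Type*} [MeasurableSpace Ω] (μ : Measure Ω)
    [IsProbabilityMeasure μ] [Fintype α] [MeasurableSpace α] [MeasurableSingletonClass α]
    {Y : Ω → α} (hY : Measurable Y) : ∑ a : α, (μ (Y ⁻¹' {a})).toReal = 1 := by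
  have h := MeasureTheory.sum_measure_preimage_singleton (μ := μ) (Finset.univ : Finset α)
    (fun y _ => hY (measurableSet_singleton y))
  rw [← ENNReal.toReal_sum (fun a _ => measure_ne_top μ _)]
  simp only [h, Finset.coe_univ, Set.preimage_univ, measure_univ, ENNReal.toReal_one]

lemma ent_comp_injective {Ω α β : Type*} [MeasurableSpace Ω] (μ : Measure Ω)
    [Fintype α] [Fintype β] {f : α → β} (hf : Function.Injective f) (Y : Ω → α) :
    ent μ (fun ω => f (Y ω)) = ent μ Y := by
  classical
  unfold ent
  congr 1
  have hpre : ∀ b : β, (fun ω => f (Y ω)) ⁻¹' {b} = Y ⁻¹' (f ⁻¹' {b}) := fun b => rfl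
  rw [← Finset.sum_subset (Finset.subset_univ (Finset.univ.image f))]
  · rw [Finset.sum_image (fun a _ a' _ h => hf h)]
    apply Finset.sum_congr rfl
    intro a _
    have : f ⁻¹' {f a} = {a} := by
      ext x; simp [hf.eq_iff]
    rw [hpre, this]
  · intro b _ hb
    have : f ⁻¹' {b} = ∅ := by
      ext x; simp only [Set.mem_preimage, Set.mem_singleton_iff, Set.mem_empty_iff_false,
        iff_false]
      rintro rfl
      exact hb (Finset.mem_image_of_mem f (Finset.mem_univ x))
    rw [hpre, this]
    simp

lemma ent_pair_of_indepFun {Ω α β : Type*} [MeasurableSpace Ω] (μ : Measure Ω)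
    [IsProbabilityMeasure μ] [Fintype α] [MeasurableSpace α] [MeasurableSingletonClass α]
    [Fintype β] [MeasurableSpace β] [MeasurableSingletonClass β]
    {A : Ω → α} {B : Ω → β} (hA : Measurable A) (hB : Measurable B)
    (hind : IndepFun A B μ) :
    ent μ (fun ω => (A ω, B ω)) = ent μ A + ent μ B := by
  set p : α → ℝ := fun a => (μ (A ⁻¹' {a})).toReal with hp
  set q : β → ℝ := fun b => (μ (B ⁻¹' {b})).toReal with hq
  have hmul : ∀ (a : α) (b : β),
      (μ ((fun ω => (A ω, B ω)) ⁻¹' {(a, b)})).toReal = p a * q b := by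
    intro a b
    have hset : (fun ω => (A ω, B ω)) ⁻¹' {(a, b)} = A ⁻¹' {a} ∩ B ⁻¹' {b} := by
      ext ω; simp [Prod.ext_iff]
    rw [hset, hind.measure_inter_preimage_eq_mul _ _ (measurableSet_singleton a)
      (measurableSet_singleton b), ENNReal.toReal_mul]
  unfold ent
  rw [Fintype.sum_prod_type]
  have hterm : ∀ (a : α) (b : β),
      (μ ((fun ω => (A ω, B ω)) ⁻¹' {(a, b)})).toReal *
        Real.logb 2 (μ ((fun ω => (A ω, B ω)) ⁻¹' {(a, b)})).toReal
      = q b * (p a * Real.logb 2 (p a)) + p a * (q b * Real.logb 2 (q b)) := by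
    intro a b
    rw [hmul]
    rcases eq_or_ne (p a) 0 with h | h
    · simp [h]
    rcases eq_or_ne (q b) 0 with h' | h'
    · simp [h']
    rw [Real.logb_mul h h']
    ring
  simp only [hterm]
  rw [Finset.sum_congr rfl (fun a _ => Finset.sum_add_distrib)]
  rw [Finset.sum_add_distrib]
  have h1 : ∑ a : α, ∑ b : β, q b * (p a * Real.logb 2 (p a))
      = ∑ a : α, p a * Real.logb 2 (p a) := by
    have hq1 : ∑ b : β, q b = 1 := sum_toReal_preimage μ hB
    apply Finset.sum_congr rfl
    intro a _
    rw [← Finset.sum_mul, hq1, one_mul]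
  have h2 : ∑ a : α, ∑ b : β, p a * (q b * Real.logb 2 (q b))
      = ∑ b : β, q b * Real.logb 2 (q b) := by
    rw [← Finset.sum_mul_sum]
    rw [sum_toReal_preimage μ hA, one_mul]
  rw [h1, h2]
  ring

lemma ent_le_logb_card {Ω α : Type*} [MeasurableSpace Ω] (μ : Measure Ω)
    [IsProbabilityMeasure μ] [Fintype α] [Nonempty α] [MeasurableSpace α]
    [MeasurableSingletonClass α] {Y : Ω → α} (hY : Measurable Y) :
    ent μ Y ≤ Real.logb 2 (Fintype.card α) := by
  classical
  set n : ℕ := Fintype.card α with hn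
  have hn0 : 0 < (n : ℝ) := by exact_mod_cast Fintype.card_pos
  set p : α → ℝ := fun a => (μ (Y ⁻¹' {a})).toReal with hp
  set f : ℝ → ℝ := fun x => (Real.log 2)⁻¹ • Real.negMulLog x with hfdef
  have hlog2 : (0:ℝ) < Real.log 2 := Real.log_pos one_lt_two
  have hconc : ConcaveOn ℝ (Set.Ici (0:ℝ)) f :=
    Real.concaveOn_negMulLog.smul (le_of_lt (inv_pos.mpr hlog2))
  have hfval : ∀ x : ℝ, f x = -(x * Real.logb 2 x) := by
    intro x
    simp only [hfdef, smul_eq_mul, Real.negMulLog, Real.logb]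
    ring
  have hjensen := hconc.le_map_sum (t := Finset.univ) (w := fun _ : α => (n:ℝ)⁻¹)
    (p := p) (fun _ _ => le_of_lt (inv_pos.mpr hn0))
    (by simp [Finset.card_univ, ← hn, mul_inv_cancel₀ hn0.ne'])
    (fun a _ => ENNReal.toReal_nonneg)
  have hsum : ∑ a : α, (n:ℝ)⁻¹ • p a = (n:ℝ)⁻¹ := by
    simp only [smul_eq_mul, ← Finset.mul_sum]
    rw [sum_toReal_preimage μ hY, mul_one]
  rw [hsum] at hjensen
  have hfl : ∀ a : α, (n:ℝ)⁻¹ • f (p a) = (n:ℝ)⁻¹ * f (p a) := fun _ => rfl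
  have h2 : ∑ a : α, f (p a) ≤ (n:ℝ) * f ((n:ℝ)⁻¹) := by
    have := mul_le_mul_of_nonneg_left hjensen (le_of_lt hn0)
    calc ∑ a : α, f (p a) = (n:ℝ) * ∑ a : α, (n:ℝ)⁻¹ • f (p a) := by
          simp only [smul_eq_mul, Finset.mul_sum, ← mul_assoc, mul_inv_cancel₀ hn0.ne', one_mul]
      _ ≤ (n:ℝ) * f ((n:ℝ)⁻¹) := this
  have hfn : (n:ℝ) * f ((n:ℝ)⁻¹) = Real.logb 2 n := by
    rw [hfval, Real.logb_inv]
    field_simp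
  have hent : ent μ Y = ∑ a : α, f (p a) := by
    unfold ent
    rw [← Finset.sum_neg_distrib]
    exact Finset.sum_congr rfl (fun a _ => by rw [hfval])
  rw [hent]
  linarith [h2, hfn.le, hfn.ge]

lemma ent_comp_le {Ω α β : Type*} [MeasurableSpace Ω] (μ : Measure Ω)
    [IsProbabilityMeasure μ] [Fintype α] [MeasurableSpace α] [MeasurableSingletonClass α]
    [Fintype β] {Z : Ω → α} (hZ : Measurable Z) (g : α → β) :
    ent μ (fun ω => g (Z ω)) ≤ ent μ Z := by
  classical
  set p : α → ℝ := fun a => (μ (Z ⁻¹' {a})).toReal with hp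
  set q : β → ℝ := fun b => (μ ((fun ω => g (Z ω)) ⁻¹' {b})).toReal with hq
  have hpnn : ∀ a, 0 ≤ p a := fun a => ENNReal.toReal_nonneg
  have hqsum : ∀ b : β, q b = ∑ a ∈ Finset.univ.filter (fun a => g a = b), p a := by
    intro b
    have hset : (fun ω => g (Z ω)) ⁻¹' {b}
        = Z ⁻¹' ↑(Finset.univ.filter (fun a => g a = b)) := by
      ext ω; simp
    rw [hq]
    simp only [hset]
    rw [← MeasureTheory.sum_measure_preimage_singleton _
      (fun a _ => hZ (measurableSet_singleton a)),
      ENNReal.toReal_sum (fun a _ => measure_ne_top μ _)]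
  have hple : ∀ (b : β) (a : α), g a = b → p a ≤ q b := by
    intro b a hab
    rw [hqsum b]
    exact Finset.single_le_sum (fun a _ => hpnn a)
      (Finset.mem_filter.mpr ⟨Finset.mem_univ a, hab⟩)
  unfold ent
  rw [neg_le_neg_iff]
  rw [← Finset.sum_fiberwise Finset.univ g (fun a => p a * Real.logb 2 (p a))]
  apply Finset.sum_le_sum
  intro b _
  show ∑ a ∈ Finset.univ.filter (fun a => g a = b), p a * Real.logb 2 (p a)
      ≤ q b * Real.logb 2 (q b)
  conv_rhs => rw [hqsum b]
  rw [Finset.sum_mul]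
  apply Finset.sum_le_sum
  intro a ha
  have hab : g a = b := (Finset.mem_filter.mp ha).2
  rcases eq_or_lt_of_le (hpnn a) with h0 | h0
  · simp [← h0]
  · exact mul_le_mul_of_nonneg_left
      (Real.logb_le_logb_of_le one_lt_two h0 (by rw [← hqsum b]; exact hple b a hab))
      (hpnn a)

/-- Chosen-secret secrecy-leakage bound: if `S'` is uniform on the finite abelian group
`𝒮`, independent of the pair `(W, S)`, and `(W, S)` determines `X`, then
`I(S'; (W, S ⊕ S')) ≤ log₂|𝒲| + log₂|𝒮| − H(X)`. -/
theorem chosen_secret_leakage_bound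
    {Ω 𝒮 𝒲 𝒳 : Type*} [MeasurableSpace Ω] (μ : Measure Ω) [IsProbabilityMeasure μ]
    [Fintype 𝒮] [Nonempty 𝒮] [AddCommGroup 𝒮]
    [MeasurableSpace 𝒮] [MeasurableSingletonClass 𝒮]
    [Fintype 𝒲] [Nonempty 𝒲] [MeasurableSpace 𝒲] [MeasurableSingletonClass 𝒲]
    [Fintype 𝒳] [MeasurableSpace 𝒳] [MeasurableSingletonClass 𝒳]
    (S S' : Ω → 𝒮) (W : Ω → 𝒲) (X : Ω → 𝒳)
    (hS : Measurable S) (hS' : Measurable S') (hW : Measurable W) (hX : Measurable X)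
    (hS'unif : Measure.map S' μ = (PMF.uniformOfFintype 𝒮).toMeasure)
    (hind : IndepFun S' (fun ω => (W ω, S ω)) μ)
    (g : 𝒲 × 𝒮 → 𝒳) (hg : ∀ ω, X ω = g (W ω, S ω)) :
    mi μ S' (fun ω => (W ω, S ω + S' ω)) ≤
      Real.logb 2 (Fintype.card 𝒲) + Real.logb 2 (Fintype.card 𝒮) - ent μ X := by
  classical
  have hWS : Measurable (fun ω => (W ω, S ω)) := hW.prodMk hS
  have hY : Measurable (fun ω => (W ω, S ω + S' ω)) := by
    have : (fun ω => (W ω, S ω + S' ω)) =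
        (fun x : 𝒲 × (𝒮 × 𝒮) => (x.1, x.2.1 + x.2.2)) ∘
          (fun ω => (W ω, (S ω, S' ω))) := rfl
    rw [this]
    exact (measurable_of_countable _).comp (hW.prodMk (hS.prodMk hS'))
  -- step 1: bijective reparametrization of the joint pair
  set φ : 𝒮 × (𝒲 × 𝒮) → 𝒮 × (𝒲 × 𝒮) := fun x => (x.1, (x.2.1, x.2.2 + x.1)) with hφ
  have hφinj : Function.Injective φ := by
    rintro ⟨a, w, s⟩ ⟨a', w', s'⟩ h
    simp only [hφ, Prod.ext_iff] at h
    obtain ⟨h1, h2, h3⟩ := h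
    subst h1
    have : s = s' := by
      have := h3
      exact add_right_cancel this
    simp_all
  have hstep1 : ent μ (fun ω => (S' ω, (W ω, S ω + S' ω)))
      = ent μ (fun ω => (S' ω, (W ω, S ω))) := by
    have : (fun ω => (S' ω, (W ω, S ω + S' ω)))
        = fun ω => φ ((fun ω' => (S' ω', (W ω', S ω'))) ω) := rfl
    rw [this]
    exact ent_comp_injective μ hφinj _
  -- step 2: independence splits the joint entropy
  have hstep2 : ent μ (fun ω => (S' ω, (W ω, S ω)))
      = ent μ S' + ent μ (fun ω => (W ω, S ω)) :=
    ent_pair_of_indepFun μ hS' hWS hind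
  -- step 3: max-entropy bound on (W, S ⊕ S')
  have hstep3 : ent μ (fun ω => (W ω, S ω + S' ω))
      ≤ Real.logb 2 (Fintype.card 𝒲) + Real.logb 2 (Fintype.card 𝒮) := by
    have h := ent_le_logb_card μ hY
    have hcard : (Fintype.card (𝒲 × 𝒮) : ℝ)
        = (Fintype.card 𝒲 : ℝ) * (Fintype.card 𝒮 : ℝ) := by
      rw [Fintype.card_prod]; push_cast; ring
    rwa [hcard, Real.logb_mul (by exact_mod_cast Fintype.card_ne_zero)
      (by exact_mod_cast Fintype.card_ne_zero)] at h
  -- step 4: (W,S) determines X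
  have hstep4 : ent μ X ≤ ent μ (fun ω => (W ω, S ω)) := by
    have : X = fun ω => g ((fun ω' => (W ω', S ω')) ω) := funext hg
    rw [this]
    exact ent_comp_le μ hWS g
  unfold mi
  rw [hstep1, hstep2]
  linarith
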